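/- arXiv:1603.02916 — 3 statements merged into one kernel-verified Lean document; each statement's English description precedes it below -/
import Mathlib

section
/- If s is a pure sequence on the neuron set N = {1,...,n} with supp(s) = N, then the bias network G(s) is a transitive tournament: for each pair of distinct neurons i, j exactly one of (i,j), (j,i) is an edge, and whenever (i,j) and (j,k) are edges, so is (i,k). -/
open Finset

namespace NeuralSeq

/-- The bias count `c_{ij}(s)`: number of index pairs `k < k'` with `s_k = i` and `s_{k'} = j`. -/
def biasCount {n : ℕ} : List (Fin n) → Fin n → Fin n → ℕ
  | [], _, _ => 0
  | a :: t, i, j => (if a = i then t.count j else 0) + biasCount t i j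

/-- The skew bias `β_{ij}(s)`. -/
noncomputable def skewBias {n : ℕ} (s : List (Fin n)) (i j : Fin n) : ℝ :=
  if 0 < s.count i ∧ 0 < s.count j then
    ((biasCount s i j : ℝ) - (biasCount s j i : ℝ)) / ((s.count i : ℝ) * (s.count j : ℝ))
  else 0

/-- The skew-bias matrix `B_skew(s)`. -/
noncomputable def Bskew {n : ℕ} (s : List (Fin n)) : Matrix (Fin n) (Fin n) ℝ :=
  Matrix.of fun i j => skewBias s i j

/-- The probability bias `b_{ij}(s)` (meaningful when `i, j ∈ supp(s)`). -/
noncomputable def probBias {n : ℕ} (s : List (Fin n)) (i j : Fin n) : ℝ :=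
  (biasCount s i j : ℝ) / ((s.count i : ℝ) * (s.count j : ℝ))

/-- The (unnormalized) center of mass `com_i(s)`, with 1-based indexing. -/
noncomputable def com {n : ℕ} (s : List (Fin n)) (i : Fin n) : ℝ :=
  if 0 < s.count i then
    (∑ k : Fin s.length, if s.get k = i then ((k : ℕ) + 1 : ℝ) else 0) / (s.count i : ℝ)
  else ((s.length : ℝ) + 1) / 2

/-- The normalized center of mass `γ_i(s)`. -/
noncomputable def gamma {n : ℕ} (s : List (Fin n)) (i : Fin n) : ℝ :=
  (2 * com s i - 1) / (s.length : ℝ) - 1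

/-- The firing rate `ρ_i(s)`. -/
noncomputable def rate {n : ℕ} (s : List (Fin n)) (i : Fin n) : ℝ :=
  (s.count i : ℝ) / (s.length : ℝ)

/-- A sequence is pure if for every pair of distinct active neurons, all spikes of one
precede all spikes of the other (equivalently, `c_{ij}(s) = 0` or `c_{ji}(s) = 0`). -/
def IsPure {n : ℕ} (s : List (Fin n)) : Prop :=
  ∀ i j : Fin n, i ≠ j → 0 < s.count i → 0 < s.count j →
    biasCount s i j = 0 ∨ biasCount s j i = 0

/-- The subsequence `s_I` of `s` given by an index set `I`. -/
def subseqOf {n : ℕ} (s : List (Fin n)) (I : Finset (Fin s.length)) : List (Fin n) :=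
  ((List.finRange s.length).filter (fun k => decide (k ∈ I))).map s.get

/-- The shuffling `s^π` of `s` by a permutation `π` of its index set. -/
def shuffle {n : ℕ} (s : List (Fin n)) (π : Equiv.Perm (Fin s.length)) : List (Fin n) :=
  (List.finRange s.length).map (fun k => s.get (π k))

/-- The order-`m` bias count `c_v(s)`: the number of subsequences of `s` equal to `v`. -/
def orderCount {n : ℕ} : List (Fin n) → List (Fin n) → ℕ
  | _, [] => 1
  | [], _ :: _ => 0
  | a :: t, v :: vs => (if a = v then orderCount t vs else 0) + orderCount t (v :: vs)

end NeuralSeq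

/-!
For distinct active neurons `c_{ij} + c_{ji} = c_i c_j > 0`, so purity forces exactly one of
`c_{ij}, c_{ji}` to vanish, and `β_{ij} > 0` holds exactly when `c_{ji} = 0`, i.e. when every spike
of `i` precedes every spike of `j`. That relation is transitive through any neuron that fires, and
`β` is antisymmetric, which together give the transitive tournament.
-/

namespace NeuralSeq

variable {n : ℕ}

theorem skewBias_swap (s : List (Fin n)) (i j : Fin n) : skewBias s j i = -skewBias s i j := by
  unfold skewBias
  by_cases h : 0 < s.count i ∧ 0 < s.count j
  · rw [if_pos h, if_pos h.symm, mul_comm, ← neg_div, neg_sub]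
  · rw [if_neg h, if_neg (mt And.symm h), neg_zero]

theorem skewBias_self (s : List (Fin n)) (i : Fin n) : skewBias s i i = 0 := by
  simp [skewBias]

theorem skewBias_pos_iff {s : List (Fin n)} {i j : Fin n} (hi : 0 < s.count i)
    (hj : 0 < s.count j) : 0 < skewBias s i j ↔ biasCount s j i < biasCount s i j := by
  have hden : (0 : ℝ) < s.count i * s.count j := by positivity
  rw [skewBias, if_pos ⟨hi, hj⟩, div_pos_iff_of_pos_right hden, sub_pos, Nat.cast_lt]

theorem biasCount_add_biasCount (s : List (Fin n)) {i j : Fin n} (hij : i ≠ j) :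
    biasCount s i j + biasCount s j i = s.count i * s.count j := by
  induction s with
  | nil => rfl
  | cons a t ih =>
    simp only [biasCount, List.count_cons, beq_iff_eq]
    split_ifs <;> grind

theorem biasCount_eq_zero_of_count_eq_zero {s : List (Fin n)} (k : Fin n) {i : Fin n}
    (hi : s.count i = 0) : biasCount s k i = 0 := by
  induction s with
  | nil => rfl
  | cons a t ih =>
    rw [List.count_cons] at hi
    have ht : t.count i = 0 := by omega
    simp [biasCount, ht, ih ht]

theorem biasCount_eq_zero_trans {s : List (Fin n)} {i j k : Fin n} (hji : biasCount s j i = 0)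
    (hkj : biasCount s k j = 0) (hj : 0 < s.count j) : biasCount s k i = 0 := by
  induction s with
  | nil => rfl
  | cons a t ih =>
    simp only [biasCount, Nat.add_eq_zero_iff] at hji hkj ⊢
    by_cases htj : t.count j = 0
    · have haj : a = j := by
        by_contra haj
        simp [htj, haj] at hj
      have hti : t.count i = 0 := by simpa [haj] using hji.1
      simp [hti, biasCount_eq_zero_of_count_eq_zero k hti]
    · have hak : a ≠ k := fun hak => htj (by simpa [hak] using hkj.1)
      exact ⟨if_neg hak, ih hji.2 hkj.2 (Nat.pos_of_ne_zero htj)⟩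

namespace IsPure

variable {s : List (Fin n)} {i j : Fin n}

theorem skewBias_pos_iff (hs : IsPure s) (hij : i ≠ j) (hi : 0 < s.count i)
    (hj : 0 < s.count j) : 0 < skewBias s i j ↔ biasCount s j i = 0 := by
  have hsum : 0 < biasCount s i j + biasCount s j i := by
    rw [biasCount_add_biasCount s hij]
    positivity
  rw [NeuralSeq.skewBias_pos_iff hi hj]
  rcases hs i j hij hi hj with h | h <;> omega

theorem skewBias_ne_zero (hs : IsPure s) (hij : i ≠ j) (hi : 0 < s.count i)
    (hj : 0 < s.count j) : skewBias s i j ≠ 0 := by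
  rcases hs i j hij hi hj with h | h
  · have hji : 0 < skewBias s j i := (hs.skewBias_pos_iff hij.symm hj hi).mpr h
    rw [skewBias_swap] at hji
    linarith
  · exact ((hs.skewBias_pos_iff hij hi hj).mpr h).ne'

end IsPure

end NeuralSeq

open NeuralSeq in
/-- the bias network of a pure full-support sequence is a transitive tournament. -/
theorem pure_bias_network_transitive_tournament {n : ℕ} (s : List (Fin n))
    (hsupp : ∀ i : Fin n, 0 < s.count i) (hpure : IsPure s) :
    (∀ i j : Fin n, i ≠ j → Xor' (0 < skewBias s i j) (0 < skewBias s j i)) ∧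
    (∀ i j k : Fin n, 0 < skewBias s i j → 0 < skewBias s j k → 0 < skewBias s i k) := by
  refine ⟨fun i j hij => ?_, fun i j k hij hjk => ?_⟩
  · rw [skewBias_swap s i j, neg_pos]
    rcases (hpure.skewBias_ne_zero hij (hsupp i) (hsupp j)).lt_or_gt with h | h
    · exact Or.inr ⟨h, h.not_gt⟩
    · exact Or.inl ⟨h, h.not_gt⟩
  · have hij' : i ≠ j := fun h => hij.ne' (h ▸ skewBias_self s i)
    have hjk' : j ≠ k := fun h => hjk.ne' (h ▸ skewBias_self s j)
    have hik : i ≠ k := by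
      rintro rfl
      rw [skewBias_swap] at hjk
      linarith
    rw [hpure.skewBias_pos_iff hij' (hsupp i) (hsupp j)] at hij
    rw [hpure.skewBias_pos_iff hjk' (hsupp j) (hsupp k)] at hjk
    rw [hpure.skewBias_pos_iff hik (hsupp i) (hsupp k)]
    exact biasCount_eq_zero_trans hij hjk (hsupp j)
end

section
/- Given any sequence s on the neuron set N = {1,...,n}, any sign value a ∈ {-1,1}, and any two distinct neurons i, j ∈ N, there exists a sequence s' on N such that sign(β_{ij}(s')) = a and sign(β_{qr}(s')) = sign(β_{qr}(s)) for all pairs of distinct neurons q, r with {q,r} ≠ {i,j}. -/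
open Finset

/-!
The sign of `β_{qr}(s)` is the sign of `c_{qr}(s) - c_{rq}(s)`. Sandwiching `s` between two
copies of `P = iᴹ jᴹ` adds `2M²` to `c_{ij} - c_{ji}` and leaves `c_{qr} - c_{rq}` unchanged for
every other pair, because the cross terms of `P` with `s` on the left and on the right cancel.
With `M = c_{ji}(s) + 1` the new difference for `(i, j)` is positive; applying this to `(j, i)`
and using `β_{ij} = -β_{ji}` gives the sign `-1`.
-/

namespace NeuralSeq

variable {n : ℕ}

def skewCount (s : List (Fin n)) (q r : Fin n) : ℤ :=
  biasCount s q r - biasCount s r q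

theorem biasCount_append (u v : List (Fin n)) (i j : Fin n) :
    biasCount (u ++ v) i j = biasCount u i j + u.count i * v.count j + biasCount v i j := by
  induction u with
  | nil => simp [biasCount]
  | cons a t ih =>
    simp only [List.cons_append, biasCount, List.count_append, List.count_cons, beq_iff_eq, ih]
    split_ifs <;> ring

theorem biasCount_eq_zero_of_count_left_eq_zero {s : List (Fin n)} {i : Fin n}
    (h : s.count i = 0) (j : Fin n) : biasCount s i j = 0 := by
  induction s with
  | nil => rfl
  | cons a t ih =>
    rw [List.count_cons] at h
    have hai : a ≠ i := by rintro rfl; simp at h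
    simp [biasCount, hai, ih (by omega)]

theorem biasCount_eq_zero_of_count_right_eq_zero {s : List (Fin n)} {j : Fin n}
    (h : s.count j = 0) (i : Fin n) : biasCount s i j = 0 := by
  induction s with
  | nil => rfl
  | cons a t ih =>
    rw [List.count_cons] at h
    have ht : t.count j = 0 := by omega
    simp [biasCount, ht, ih ht]

theorem skewCount_swap (s : List (Fin n)) (q r : Fin n) :
    skewCount s q r = -skewCount s r q := by
  simp only [skewCount]; ring

theorem skewCount_append (u v : List (Fin n)) (q r : Fin n) :
    skewCount (u ++ v) q r = skewCount u q r + skewCount v q r +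
      (u.count q * v.count r - u.count r * v.count q) := by
  simp only [skewCount, biasCount_append]; push_cast; ring

theorem skewCount_append_append_self (u v : List (Fin n)) (q r : Fin n) :
    skewCount (u ++ v ++ u) q r = 2 * skewCount u q r + skewCount v q r := by
  simp only [skewCount_append, List.count_append]; push_cast; ring

theorem skewCount_replicate (m : ℕ) (x q r : Fin n) :
    skewCount (List.replicate m x) q r = 0 := by
  induction m with
  | zero => rfl
  | succ m ih =>
    rw [List.replicate_succ', skewCount_append, ih]
    simp only [skewCount, biasCount, List.count_replicate, List.count_singleton]
    grind

theorem skewCount_replicate_append_replicate (m : ℕ) (x y q r : Fin n) :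
    skewCount (List.replicate m x ++ List.replicate m y) q r =
      m ^ 2 * ((if q = x ∧ r = y then 1 else 0) - (if q = y ∧ r = x then 1 else 0)) := by
  rw [skewCount_append, skewCount_replicate, skewCount_replicate]
  simp only [List.count_replicate, beq_iff_eq]
  grind

theorem sign_div_of_pos (x : ℝ) {d : ℝ} (hd : 0 < d) : Real.sign (x / d) = Real.sign x := by
  rcases lt_trichotomy x 0 with h | rfl | h
  · rw [Real.sign_of_neg h, Real.sign_of_neg (div_neg_of_neg_of_pos h hd)]
  · simp
  · rw [Real.sign_of_pos h, Real.sign_of_pos (div_pos h hd)]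

theorem sign_skewBias (s : List (Fin n)) (q r : Fin n) :
    Real.sign (skewBias s q r) = Real.sign (skewCount s q r) := by
  unfold skewBias
  split_ifs with h
  · rw [sign_div_of_pos _ (by obtain ⟨hq, hr⟩ := h; positivity), skewCount]
    push_cast; rfl
  · have hq_or_hr : s.count q = 0 ∨ s.count r = 0 := by omega
    have : skewCount s q r = 0 := by
      rcases hq_or_hr with h0 | h0 <;>
        simp [skewCount, biasCount_eq_zero_of_count_left_eq_zero h0,
          biasCount_eq_zero_of_count_right_eq_zero h0]
    simp [this]

theorem exists_skewCount_pos_of_ne {i j : Fin n} (hij : i ≠ j) (s : List (Fin n)) :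
    ∃ s' : List (Fin n), 0 < skewCount s' i j ∧
      ∀ q r : Fin n, ¬(q = i ∧ r = j) → ¬(q = j ∧ r = i) → skewCount s' q r = skewCount s q r := by
  set M := biasCount s j i + 1
  set P := List.replicate M i ++ List.replicate M j
  refine ⟨P ++ s ++ P, ?_, fun q r hne_ij hne_ji => ?_⟩
  · rw [skewCount_append_append_self, skewCount_replicate_append_replicate,
      if_pos ⟨rfl, rfl⟩, if_neg (fun h => hij h.1), skewCount]
    have : (biasCount s j i : ℤ) < M := by push_cast [M]; omega
    nlinarith
  · rw [skewCount_append_append_self, skewCount_replicate_append_replicate, if_neg hne_ij,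
      if_neg hne_ji]
    ring

end NeuralSeq

open NeuralSeq in
/-- one entry of the sign matrix of the skew-bias matrix can be set to any
value in `{-1,1}` without changing any of the other off-diagonal signs. -/
theorem change_single_bias_sign {n : ℕ} (s : List (Fin n)) (a : ℝ) (ha : a = -1 ∨ a = 1)
    (i j : Fin n) (hij : i ≠ j) :
    ∃ s' : List (Fin n),
      Real.sign (skewBias s' i j) = a ∧
      ∀ q r : Fin n, q ≠ r → ({q, r} : Finset (Fin n)) ≠ {i, j} →
        Real.sign (skewBias s' q r) = Real.sign (skewBias s q r) := by
  have other_pair {q r : Fin n} (hqr : ({q, r} : Finset (Fin n)) ≠ {i, j}) :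
      ¬(q = i ∧ r = j) ∧ ¬(q = j ∧ r = i) := by
    refine ⟨?_, ?_⟩ <;> rintro ⟨rfl, rfl⟩
    exacts [hqr rfl, hqr (Finset.pair_comm _ _)]
  rcases ha with rfl | rfl
  · obtain ⟨s', hpos, hsame⟩ := exists_skewCount_pos_of_ne hij.symm s
    refine ⟨s', ?_, fun q r _ hqr => ?_⟩
    · rw [sign_skewBias, skewCount_swap, Int.cast_neg, Real.sign_neg,
        Real.sign_of_pos (by exact_mod_cast hpos)]
    · rw [sign_skewBias, sign_skewBias, hsame q r (other_pair hqr).2 (other_pair hqr).1]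
  · obtain ⟨s', hpos, hsame⟩ := exists_skewCount_pos_of_ne hij s
    refine ⟨s', ?_, fun q r _ hqr => ?_⟩
    · rw [sign_skewBias, Real.sign_of_pos (by exact_mod_cast hpos)]
    · rw [sign_skewBias, sign_skewBias, hsame q r (other_pair hqr).1 (other_pair hqr).2]
end

section
/- Let s = (s_1,...,s_ℓ) be a sequence, and let k_1 < k_2 < ... < k_m be indices with k_{a+1} > k_a + 1 for all a ∈ {1,...,m-1} and k_m + 1 ≤ ℓ. Let π be the permutation of {1,...,ℓ} that swaps k_a with k_a + 1 for each a ∈ {1,...,m} and fixes all other indices. If the neurons s_{k_1},...,s_{k_m} are pairwise distinct and {s_{k_1},...,s_{k_m}} = {s_{k_1+1},...,s_{k_m+1}} as sets, then com_i(s) = com_i(s^π) for every neuron i. -/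
open Finset

/-!
Let `f(k) = 1` if `s_k = i` and `0` otherwise. The numerator of `com_i(s^π)` is
`∑ₖ f(π k)(k + 1) = ∑ₖ f(k)(k + 1) + ∑ₖ f(π k)(k - π k)`, and the displacement `k - π k` is `-1`
at each `k_a`, `+1` at each `k_a + 1` and `0` elsewhere. The correction term is therefore
`#{a | s_{k_a} = i} - #{a | s_{k_a + 1} = i}`; both families of neurons are injective with the same
image, so both counts are `1` or `0` according to whether `i` lies in that image.
-/

open Function

namespace Fintype

variable {ι κ M : Type*} [Fintype κ]

theorem sum_comp_eq_of_image_eq {α : Type*} [DecidableEq α] [AddCommMonoid M] {f g : κ → α}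
    (hf : Injective f) (himage : univ.image f = univ.image g) (h : α → M) :
    ∑ a, h (f a) = ∑ a, h (g a) := by
  have hg : Set.InjOn g (univ : Finset κ) :=
    injOn_of_card_image_eq (by rw [← himage, card_image_of_injective _ hf])
  rw [← sum_image hf.injOn, himage, sum_image hg]

theorem sum_eq_add_of_support_subset [Fintype ι] [AddCommMonoid M] {e₁ e₂ : κ → ι}
    (he : Injective (Sum.elim e₁ e₂)) (F : ι → M)
    (hF : ∀ k, (∀ a, k ≠ e₁ a) → (∀ a, k ≠ e₂ a) → F k = 0) :
    ∑ k, F k = ∑ a, F (e₁ a) + ∑ a, F (e₂ a) := by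
  have hsum := sum_sum_type (F ∘ Sum.elim e₁ e₂)
  simp only [comp_apply, Sum.elim_inl, Sum.elim_inr] at hsum
  rw [← hsum]
  refine (sum_of_injective _ he _ F (fun k hk => hF k ?_ ?_) fun _ => rfl).symm
  · exact fun a h => hk ⟨.inl a, h.symm⟩
  · exact fun a h => hk ⟨.inr a, h.symm⟩

end Fintype

namespace Equiv.Perm

variable {ι κ : Type*}

structure SwapsPairs (π : Equiv.Perm ι) (e₁ e₂ : κ → ι) : Prop where
  injective_left : Injective e₁
  disjoint : ∀ a b, e₁ a ≠ e₂ b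
  apply_left : ∀ a, π (e₁ a) = e₂ a
  apply_right : ∀ a, π (e₂ a) = e₁ a
  apply_of_ne : ∀ k, (∀ a, k ≠ e₁ a) → (∀ a, k ≠ e₂ a) → π k = k

namespace SwapsPairs

variable {π : Equiv.Perm ι} {e₁ e₂ : κ → ι}

theorem injective_sumElim (h : π.SwapsPairs e₁ e₂) : Injective (Sum.elim e₁ e₂) :=
  h.injective_left.sumElim
    (fun a b hab => h.injective_left <| by rw [← h.apply_right, hab, h.apply_right])
    h.disjoint

theorem sum_mul_comp [Fintype ι] [Fintype κ] {R : Type*} [CommRing R] (h : π.SwapsPairs e₁ e₂)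
    (w pos : ι → R) (hpos : ∀ a, pos (e₂ a) = pos (e₁ a) + 1) :
    ∑ k, w (π k) * pos k = ∑ k, w k * pos k + (∑ a, w (e₁ a) - ∑ a, w (e₂ a)) := by
  have hsplit : ∑ k, w (π k) * pos k
      = ∑ k, w (π k) * pos (π k) + ∑ k, w (π k) * (pos k - pos (π k)) := by
    rw [← sum_add_distrib]
    exact sum_congr rfl fun _ _ => by ring
  rw [hsplit, Equiv.sum_comp π (fun k => w k * pos k),
    Fintype.sum_eq_add_of_support_subset h.injective_sumElim
      (fun k => w (π k) * (pos k - pos (π k)))]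
  · simp only [h.apply_left, h.apply_right, hpos, sub_add_cancel_left, add_sub_cancel_left,
      mul_neg, mul_one, sum_neg_distrib]
    abel
  · intro k hk₁ hk₂
    rw [h.apply_of_ne k hk₁ hk₂, sub_self, mul_zero]

end SwapsPairs

end Equiv.Perm

namespace NeuralSeq

variable {n : ℕ}

theorem shuffle_eq_ofFn (s : List (Fin n)) (π : Equiv.Perm (Fin s.length)) :
    shuffle s π = List.ofFn (s.get ∘ π) :=
  List.ofFn_eq_map.symm

theorem length_shuffle (s : List (Fin n)) (π : Equiv.Perm (Fin s.length)) :
    (shuffle s π).length = s.length := by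
  simp [shuffle]

theorem get_shuffle (s : List (Fin n)) (π : Equiv.Perm (Fin s.length))
    (k : Fin (shuffle s π).length) :
    (shuffle s π).get k = s.get (π (k.cast (length_shuffle s π))) := by
  rw [List.get_eq_getElem]
  simp [shuffle, Fin.cast]

theorem count_shuffle (s : List (Fin n)) (π : Equiv.Perm (Fin s.length)) (i : Fin n) :
    (shuffle s π).count i = s.count i := by
  rw [shuffle_eq_ofFn, (π.ofFn_comp_perm s.get).count_eq, List.ofFn_get]

theorem com_shuffle (s : List (Fin n)) (π : Equiv.Perm (Fin s.length)) (i : Fin n) :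
    com (shuffle s π) i = if 0 < s.count i then
      (∑ k : Fin s.length, if s.get (π k) = i then ((k : ℕ) + 1 : ℝ) else 0) / (s.count i : ℝ)
    else ((s.length : ℝ) + 1) / 2 := by
  rw [com, count_shuffle]
  congr 1
  · congr 1
    refine Fintype.sum_equiv (finCongr (length_shuffle s π)) _ _ fun k => ?_
    rw [get_shuffle]
    rfl
  · rw [length_shuffle]

theorem com_eq_com_shuffle_of_swapsPairs {κ : Type*} [Fintype κ] (s : List (Fin n))
    {π : Equiv.Perm (Fin s.length)} {e₁ e₂ : κ → Fin s.length} (hπ : π.SwapsPairs e₁ e₂)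
    (hadj : ∀ a, (e₂ a : ℕ) = e₁ a + 1) (hinj : Injective fun a => s.get (e₁ a))
    (himage : univ.image (fun a => s.get (e₁ a)) = univ.image (fun a => s.get (e₂ a)))
    (i : Fin n) :
    com s i = com (shuffle s π) i := by
  have hmoment := hπ.sum_mul_comp (fun k => if s.get k = i then (1 : ℝ) else 0)
    (fun k => (k : ℕ) + 1) (fun a => by simp [hadj])
  rw [Fintype.sum_comp_eq_of_image_eq hinj himage (fun x => if x = i then (1 : ℝ) else 0),
    sub_self, add_zero] at hmoment
  simp only [boole_mul] at hmoment
  rw [com_shuffle, com, hmoment]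

end NeuralSeq

open NeuralSeq in
/-- simultaneously swapping disjoint adjacent pairs at positions
`ks a, ks a + 1`, where the neurons `s_{ks a}` are pairwise distinct and
`{s_{ks a}} = {s_{ks a + 1}}` as sets, preserves every center of mass.
(Indices are 0-based here.) -/
theorem disjoint_adjacent_swaps_preserve_com {n : ℕ} (s : List (Fin n))
    (m : ℕ) (ks : Fin m → ℕ)
    (hgap : ∀ a b : Fin m, a < b → ks a + 1 < ks b)
    (hbound : ∀ a : Fin m, ks a + 1 < s.length)
    (hinj : Function.Injective
      (fun a : Fin m => s.get ⟨ks a, Nat.lt_of_succ_lt (hbound a)⟩))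
    (hsets : Finset.univ.image (fun a : Fin m => s.get ⟨ks a, Nat.lt_of_succ_lt (hbound a)⟩) =
      Finset.univ.image (fun a : Fin m => s.get ⟨ks a + 1, hbound a⟩))
    (π : Equiv.Perm (Fin s.length))
    (hπ : ∀ t : Fin s.length, (π t : ℕ) =
      if ∃ a : Fin m, (t : ℕ) = ks a then (t : ℕ) + 1
      else if ∃ a : Fin m, (t : ℕ) = ks a + 1 then (t : ℕ) - 1
      else (t : ℕ)) :
    ∀ i : Fin n, com s i = com (shuffle s π) i := by
  intro i
  have hne : ∀ a b, ks a ≠ ks b + 1 := by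
    intro a b
    rcases lt_trichotomy a b with h | rfl | h
    · have := hgap a b h; omega
    · omega
    · have := hgap b a h; omega
  let e₁ : Fin m → Fin s.length := fun a => ⟨ks a, Nat.lt_of_succ_lt (hbound a)⟩
  let e₂ : Fin m → Fin s.length := fun a => ⟨ks a + 1, hbound a⟩
  have hswaps : π.SwapsPairs e₁ e₂ :=
    { injective_left := hinj.of_comp
      disjoint := fun a b h => hne a b (congrArg Fin.val h)
      apply_left := fun a => Fin.ext (by simp [e₁, e₂, hπ])
      apply_right := fun a => Fin.ext <| by
        rw [hπ, if_neg fun ⟨b, hb⟩ => hne b a hb.symm, if_pos ⟨a, rfl⟩]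
        exact Nat.add_sub_cancel _ _
      apply_of_ne := fun k h₁ h₂ => Fin.ext <| by
        rw [hπ, if_neg fun ⟨a, ha⟩ => h₁ a (Fin.ext ha), if_neg fun ⟨a, ha⟩ => h₂ a (Fin.ext ha)] }
  exact com_eq_com_shuffle_of_swapsPairs s hswaps (fun _ => rfl) hinj hsets i
end
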